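/- arXiv:1201.3340 — 2 statements merged into one kernel-verified Lean document; each statement's English description precedes it below -/
import Mathlib

section
/- (Entropic bilocality inequality, class 6.) Let A₀, A₁, B, C₀, C₁ be jointly distributed random variables taking values in finite sets such that the pair (A₀,A₁) is independent of the pair (C₀,C₁), i.e. H(A₀A₁C₀C₁) = H(A₀A₁) + H(C₀C₁). Then H(A₁) + H(C₁) + H(A₀B) + H(BC₀) ≤ H(A₁B) + H(BC₁) + H(A₀BC₀). -/
/-- Shannon entropy (in bits) of a finitely supported weight function,
with the convention `0 * logb 2 0 = 0` (automatic since `Real.logb 2 0 = 0`). -/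
noncomputable def shannonEntropy {β : Type*} [Fintype β] (q : β → ℝ) : ℝ :=
  -∑ b, q b * Real.logb 2 (q b)

/-- Joint Shannon entropy of a random variable `X` on a finite probability space
with weights `p`. -/
noncomputable def jointEntropy {Ω β : Type*} [Fintype Ω] [Fintype β] [DecidableEq β]
    (p : Ω → ℝ) (X : Ω → β) : ℝ :=
  shannonEntropy (fun b => ∑ ω ∈ Finset.univ.filter (fun ω => X ω = b), p ω)

open Finset Real

lemma shannonEntropy_eq {β : Type*} [Fintype β] (q : β → ℝ) :
    shannonEntropy q = (Real.log 2)⁻¹ * ∑ b, Real.negMulLog (q b) := by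
  rw [shannonEntropy, Finset.mul_sum, ← Finset.sum_neg_distrib]
  refine Finset.sum_congr rfl fun b _ => ?_
  simp [Real.logb, Real.negMulLog, div_eq_inv_mul]
  ring

lemma negMulLog_sum_le {ι : Type*} (s : Finset ι) (f : ι → ℝ) (hf : ∀ i ∈ s, 0 ≤ f i) :
    Real.negMulLog (∑ i ∈ s, f i) ≤ ∑ i ∈ s, Real.negMulLog (f i) := by
  simp only [Real.negMulLog, neg_mul, ← Finset.sum_neg_distrib, Finset.sum_mul]
  apply Finset.sum_le_sum
  intro i hi
  rw [neg_le_neg_iff]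
  rcases eq_or_lt_of_le (hf i hi) with h | h
  · simp [← h]
  · exact mul_le_mul_of_nonneg_left
      (Real.log_le_log h (Finset.single_le_sum hf hi)) (le_of_lt h)

/-- Data processing: entropy of a function of `X` is at most entropy of `X`. -/
lemma jointEntropy_comp_le {Ω β γ : Type*} [Fintype Ω] [Fintype β] [DecidableEq β]
    [Fintype γ] [DecidableEq γ] (p : Ω → ℝ) (hp0 : ∀ ω, 0 ≤ p ω) (X : Ω → β) (g : β → γ) :
    jointEntropy p (fun ω => g (X ω)) ≤ jointEntropy p X := by
  set q : β → ℝ := fun b => ∑ ω ∈ Finset.univ.filter (fun ω => X ω = b), p ω with hq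
  have hq0 : ∀ b, 0 ≤ q b := fun b => Finset.sum_nonneg fun ω _ => hp0 ω
  have hfib : ∀ c, (∑ ω ∈ Finset.univ.filter (fun ω => g (X ω) = c), p ω)
      = ∑ b ∈ Finset.univ.filter (fun b => g b = c), q b := by
    intro c
    rw [hq]
    rw [Finset.sum_fiberwise_eq_sum_filter Finset.univ (Finset.univ.filter (fun b => g b = c)) X p]
    apply Finset.sum_congr _ (fun _ _ => rfl)
    apply Finset.filter_congr
    intro ω _
    simp
  rw [jointEntropy, jointEntropy, shannonEntropy_eq, shannonEntropy_eq]
  apply mul_le_mul_of_nonneg_left _ (by positivity)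
  calc ∑ c, Real.negMulLog (∑ ω ∈ Finset.univ.filter (fun ω => g (X ω) = c), p ω)
      = ∑ c, Real.negMulLog (∑ b ∈ Finset.univ.filter (fun b => g b = c), q b) := by
        exact Finset.sum_congr rfl fun c _ => by rw [hfib]
    _ ≤ ∑ c, ∑ b ∈ Finset.univ.filter (fun b => g b = c), Real.negMulLog (q b) :=
        Finset.sum_le_sum fun c _ => negMulLog_sum_le _ _ fun b _ => hq0 b
    _ = ∑ b, Real.negMulLog (q b) := Finset.sum_fiberwise _ _ _

lemma jointEntropy_comp_eq {Ω β γ : Type*} [Fintype Ω] [Fintype β] [DecidableEq β]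
    [Fintype γ] [DecidableEq γ] (p : Ω → ℝ) (hp0 : ∀ ω, 0 ≤ p ω) (X : Ω → β)
    (g : β → γ) (h : γ → β) (hgh : ∀ b, h (g b) = b) :
    jointEntropy p (fun ω => g (X ω)) = jointEntropy p X := by
  refine le_antisymm (jointEntropy_comp_le p hp0 X g) ?_
  have h2 := jointEntropy_comp_le p hp0 (fun ω => g (X ω)) h
  have h3 : (fun ω => h (g (X ω))) = X := by funext ω; rw [hgh]
  rwa [h3] at h2

/-- Distribution-level submodularity (strong subadditivity) of `-∑ x log x`. -/
lemma shannon_submod {α β γ : Type*} [Fintype α] [Fintype β] [Fintype γ]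
    (q : α × β × γ → ℝ) (hq : ∀ t, 0 ≤ q t) :
    (∑ t, Real.negMulLog (q t)) + ∑ y, Real.negMulLog (∑ t : α × γ, q (t.1, y, t.2)) ≤
    (∑ xy : α × β, Real.negMulLog (∑ z, q (xy.1, xy.2, z))) +
      ∑ yz : β × γ, Real.negMulLog (∑ x, q (x, yz.1, yz.2)) := by
  have hA : ∀ x y, (0:ℝ) ≤ ∑ w, q (x, y, w) := fun x y => Finset.sum_nonneg fun _ _ => hq _
  have hC : ∀ y z, (0:ℝ) ≤ ∑ v, q (v, y, z) := fun y z => Finset.sum_nonneg fun _ _ => hq _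
  have hMy : ∀ y, (∑ t : α × γ, q (t.1, y, t.2)) = ∑ x, ∑ z, q (x, y, z) := fun y => by
    rw [Fintype.sum_prod_type]
  have hM : ∀ y, (0:ℝ) ≤ ∑ t : α × γ, q (t.1, y, t.2) :=
    fun y => Finset.sum_nonneg fun _ _ => hq _
  -- termwise key inequality
  have key : ∀ x y z,
      q (x,y,z) * Real.log (∑ w, q (x,y,w)) + q (x,y,z) * Real.log (∑ v, q (v,y,z))
        - q (x,y,z) * Real.log (q (x,y,z))
        - q (x,y,z) * Real.log (∑ t : α × γ, q (t.1, y, t.2))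
      ≤ (∑ w, q (x,y,w)) * (∑ v, q (v,y,z)) / (∑ t : α × γ, q (t.1, y, t.2)) - q (x,y,z) := by
    intro x y z
    rcases eq_or_lt_of_le (hq (x,y,z)) with ha | ha
    · rw [← ha]
      simp
      exact div_nonneg (mul_nonneg (hA x y) (hC y z)) (hM y)
    · have hApos : (0:ℝ) < ∑ w, q (x,y,w) :=
        lt_of_lt_of_le ha (Finset.single_le_sum (f := fun w => q (x,y,w))
          (fun _ _ => hq _) (Finset.mem_univ z))
      have hCpos : (0:ℝ) < ∑ v, q (v,y,z) :=
        lt_of_lt_of_le ha (Finset.single_le_sum (f := fun v => q (v,y,z))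
          (fun _ _ => hq _) (Finset.mem_univ x))
      have hMpos : (0:ℝ) < ∑ t : α × γ, q (t.1, y, t.2) :=
        lt_of_lt_of_le ha (Finset.single_le_sum (f := fun t : α × γ => q (t.1, y, t.2))
          (fun _ _ => hq _) (Finset.mem_univ (x, z)))
      set a := q (x,y,z) with hadef
      set A := ∑ w, q (x,y,w) with hAdef
      set C := ∑ v, q (v,y,z) with hCdef
      set M := ∑ t : α × γ, q (t.1, y, t.2) with hMdef
      have e1 : a * Real.log A + a * Real.log C - a * Real.log a - a * Real.log M
          = a * Real.log (A * C / (M * a)) := by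
        rw [Real.log_div (by positivity) (by positivity),
          Real.log_mul (ne_of_gt hApos) (ne_of_gt hCpos),
          Real.log_mul (ne_of_gt hMpos) (ne_of_gt ha)]
        ring
      rw [e1]
      have e2 : a * (A * C / (M * a) - 1) = A * C / M - a := by
        field_simp
      calc a * Real.log (A * C / (M * a)) ≤ a * (A * C / (M * a) - 1) :=
            mul_le_mul_of_nonneg_left
              (Real.log_le_sub_one_of_pos (by positivity)) (le_of_lt ha)
        _ = A * C / M - a := e2
  -- sum of the RHS of key is ≤ 0
  have bound : ∑ x, ∑ y, ∑ z,
      ((∑ w, q (x,y,w)) * (∑ v, q (v,y,z)) / (∑ t : α × γ, q (t.1, y, t.2)) - q (x,y,z)) ≤ 0 := by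
    simp only [Finset.sum_sub_distrib]
    rw [sub_nonpos]
    rw [Finset.sum_comm (γ := α) (f := fun x y => ∑ z,
      (∑ w, q (x,y,w)) * (∑ v, q (v,y,z)) / (∑ t : α × γ, q (t.1, y, t.2)))]
    rw [Finset.sum_comm (γ := α) (f := fun x y => ∑ z, q (x,y,z))]
    apply Finset.sum_le_sum
    intro y _
    have eC : ∑ z, ∑ v, q (v, y, z) = ∑ t : α × γ, q (t.1, y, t.2) := by
      rw [hMy y, Finset.sum_comm]
    have eA : ∑ x, ∑ w, q (x, y, w) = ∑ t : α × γ, q (t.1, y, t.2) := (hMy y).symm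
    calc ∑ x, ∑ z, (∑ w, q (x,y,w)) * (∑ v, q (v,y,z)) / (∑ t : α × γ, q (t.1, y, t.2))
        = (∑ x, ∑ w, q (x,y,w)) * (∑ z, ∑ v, q (v,y,z)) / (∑ t : α × γ, q (t.1, y, t.2)) := by
          rw [Finset.sum_mul, Finset.sum_div]
          refine Finset.sum_congr rfl fun x _ => ?_
          rw [Finset.mul_sum, Finset.sum_div]
      _ = (∑ t : α × γ, q (t.1, y, t.2)) * (∑ t : α × γ, q (t.1, y, t.2)) /
            (∑ t : α × γ, q (t.1, y, t.2)) := by rw [eA, eC]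
      _ ≤ ∑ t : α × γ, q (t.1, y, t.2) := by
          rcases eq_or_lt_of_le (hM y) with h | h
          · rw [← h]; simp
          · rw [mul_div_assoc, div_self (ne_of_gt h), mul_one]
      _ = ∑ x, ∑ z, q (x, y, z) := hMy y
  -- identities rewriting each entropy as a triple sum
  have id_q : (∑ t, Real.negMulLog (q t))
      = -∑ x, ∑ y, ∑ z, q (x,y,z) * Real.log (q (x,y,z)) := by
    simp only [Fintype.sum_prod_type, Real.negMulLog, neg_mul, Finset.sum_neg_distrib]
  have id_my : (∑ y, Real.negMulLog (∑ t : α × γ, q (t.1, y, t.2)))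
      = -∑ x, ∑ y, ∑ z, q (x,y,z) * Real.log (∑ t : α × γ, q (t.1, y, t.2)) := by
    rw [Finset.sum_comm (γ := α) (f := fun x y => ∑ z, q (x,y,z) * Real.log (∑ t : α × γ, q (t.1, y, t.2)))]
    rw [← Finset.sum_neg_distrib]
    refine Finset.sum_congr rfl fun y _ => ?_
    have inner : ∑ x, ∑ z, q (x,y,z) * Real.log (∑ t : α × γ, q (t.1, y, t.2))
        = (∑ x, ∑ z, q (x,y,z)) * Real.log (∑ t : α × γ, q (t.1, y, t.2)) := by
      rw [Finset.sum_mul]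
      exact Finset.sum_congr rfl fun x _ => (Finset.sum_mul _ _ _).symm
    rw [inner, ← hMy y, Real.negMulLog, neg_mul]
  have id_mxy : (∑ xy : α × β, Real.negMulLog (∑ z, q (xy.1, xy.2, z)))
      = -∑ x, ∑ y, ∑ z, q (x,y,z) * Real.log (∑ w, q (x,y,w)) := by
    rw [Fintype.sum_prod_type, ← Finset.sum_neg_distrib]
    refine Finset.sum_congr rfl fun x _ => ?_
    rw [← Finset.sum_neg_distrib]
    refine Finset.sum_congr rfl fun y _ => ?_
    rw [Real.negMulLog, neg_mul, Finset.sum_mul, ← Finset.sum_neg_distrib]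
  have id_myz : (∑ yz : β × γ, Real.negMulLog (∑ x, q (x, yz.1, yz.2)))
      = -∑ x, ∑ y, ∑ z, q (x,y,z) * Real.log (∑ v, q (v,y,z)) := by
    rw [Fintype.sum_prod_type]
    rw [Finset.sum_comm (γ := α) (f := fun x y => ∑ z, q (x,y,z) * Real.log (∑ v, q (v,y,z)))]
    rw [← Finset.sum_neg_distrib]
    refine Finset.sum_congr rfl fun y _ => ?_
    rw [show (∑ x, ∑ z, q (x,y,z) * Real.log (∑ v, q (v,y,z)))
        = ∑ z, ∑ x, q (x,y,z) * Real.log (∑ v, q (v,y,z)) from Finset.sum_comm]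
    rw [← Finset.sum_neg_distrib]
    refine Finset.sum_congr rfl fun z _ => ?_
    rw [Real.negMulLog, neg_mul, Finset.sum_mul, ← Finset.sum_neg_distrib]
  rw [id_q, id_my, id_mxy, id_myz]
  have sum_key : ∑ x, ∑ y, ∑ z,
      (q (x,y,z) * Real.log (∑ w, q (x,y,w)) + q (x,y,z) * Real.log (∑ v, q (v,y,z))
        - q (x,y,z) * Real.log (q (x,y,z))
        - q (x,y,z) * Real.log (∑ t : α × γ, q (t.1, y, t.2)))
      ≤ ∑ x, ∑ y, ∑ z,
      ((∑ w, q (x,y,w)) * (∑ v, q (v,y,z)) / (∑ t : α × γ, q (t.1, y, t.2)) - q (x,y,z)) :=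
    Finset.sum_le_sum fun x _ => Finset.sum_le_sum fun y _ => Finset.sum_le_sum fun z _ =>
      key x y z
  have expand : ∑ x, ∑ y, ∑ z,
      (q (x,y,z) * Real.log (∑ w, q (x,y,w)) + q (x,y,z) * Real.log (∑ v, q (v,y,z))
        - q (x,y,z) * Real.log (q (x,y,z))
        - q (x,y,z) * Real.log (∑ t : α × γ, q (t.1, y, t.2)))
      = (∑ x, ∑ y, ∑ z, q (x,y,z) * Real.log (∑ w, q (x,y,w)))
        + (∑ x, ∑ y, ∑ z, q (x,y,z) * Real.log (∑ v, q (v,y,z)))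
        - (∑ x, ∑ y, ∑ z, q (x,y,z) * Real.log (q (x,y,z)))
        - (∑ x, ∑ y, ∑ z, q (x,y,z) * Real.log (∑ t : α × γ, q (t.1, y, t.2))) := by
    simp only [Finset.sum_sub_distrib, Finset.sum_add_distrib]
  rw [expand] at sum_key
  linarith [le_trans sum_key bound]

lemma jointEntropy_submod {Ω α β γ : Type*} [Fintype Ω] [Fintype α] [DecidableEq α]
    [Fintype β] [DecidableEq β] [Fintype γ] [DecidableEq γ]
    (p : Ω → ℝ) (hp0 : ∀ ω, 0 ≤ p ω) (X : Ω → α) (Y : Ω → β) (Z : Ω → γ) :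
    jointEntropy p (fun ω => (X ω, Y ω, Z ω)) + jointEntropy p Y ≤
      jointEntropy p (fun ω => (X ω, Y ω)) + jointEntropy p (fun ω => (Y ω, Z ω)) := by
  classical
  set q : α × β × γ → ℝ :=
    fun t => ∑ ω ∈ Finset.univ.filter (fun ω => (X ω, Y ω, Z ω) = t), p ω with hqdef
  have hq : ∀ t, 0 ≤ q t := fun t => Finset.sum_nonneg fun ω _ => hp0 ω
  have e_xy : ∀ x y, (∑ z, q (x, y, z))
      = ∑ ω ∈ Finset.univ.filter (fun ω => (X ω, Y ω) = (x, y)), p ω := by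
    intro x y
    rw [← Finset.sum_fiberwise (Finset.univ.filter (fun ω => (X ω, Y ω) = (x, y))) Z p]
    refine Finset.sum_congr rfl fun z _ => Finset.sum_congr ?_ fun _ _ => rfl
    rw [Finset.filter_filter]
    apply Finset.filter_congr
    intro ω _
    simp only [Prod.ext_iff]
    tauto
  have e_yz : ∀ y z, (∑ x, q (x, y, z))
      = ∑ ω ∈ Finset.univ.filter (fun ω => (Y ω, Z ω) = (y, z)), p ω := by
    intro y z
    rw [← Finset.sum_fiberwise (Finset.univ.filter (fun ω => (Y ω, Z ω) = (y, z))) X p]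
    refine Finset.sum_congr rfl fun x _ => Finset.sum_congr ?_ fun _ _ => rfl
    rw [Finset.filter_filter]
    apply Finset.filter_congr
    intro ω _
    simp only [Prod.ext_iff]
    tauto
  have e_y : ∀ y, (∑ t : α × γ, q (t.1, y, t.2))
      = ∑ ω ∈ Finset.univ.filter (fun ω => Y ω = y), p ω := by
    intro y
    rw [← Finset.sum_fiberwise (Finset.univ.filter (fun ω => Y ω = y))
      (fun ω => (X ω, Z ω)) p]
    refine Finset.sum_congr rfl fun t _ => Finset.sum_congr ?_ fun _ _ => rfl
    rw [Finset.filter_filter]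
    apply Finset.filter_congr
    intro ω _
    simp only [Prod.ext_iff]
    tauto
  rw [jointEntropy, jointEntropy, jointEntropy, jointEntropy,
    shannonEntropy_eq, shannonEntropy_eq, shannonEntropy_eq, shannonEntropy_eq,
    ← mul_add, ← mul_add]
  refine mul_le_mul_of_nonneg_left ?_ (by positivity)
  have lhs_eq : (∑ t, Real.negMulLog (∑ ω ∈ Finset.univ.filter (fun ω => (X ω, Y ω, Z ω) = t), p ω))
      + ∑ y, Real.negMulLog (∑ ω ∈ Finset.univ.filter (fun ω => Y ω = y), p ω)
      = (∑ t, Real.negMulLog (q t)) + ∑ y, Real.negMulLog (∑ t : α × γ, q (t.1, y, t.2)) := by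
    congr 1
    exact Finset.sum_congr rfl fun y _ => by rw [e_y y]
  have rhs_eq : (∑ xy : α × β, Real.negMulLog (∑ ω ∈ Finset.univ.filter (fun ω => (X ω, Y ω) = xy), p ω))
      + ∑ yz : β × γ, Real.negMulLog (∑ ω ∈ Finset.univ.filter (fun ω => (Y ω, Z ω) = yz), p ω)
      = (∑ xy : α × β, Real.negMulLog (∑ z, q (xy.1, xy.2, z)))
      + ∑ yz : β × γ, Real.negMulLog (∑ x, q (x, yz.1, yz.2)) := by
    congr 1
    · exact Finset.sum_congr rfl fun xy _ => by rw [e_xy xy.1 xy.2]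
    · exact Finset.sum_congr rfl fun yz _ => by rw [e_yz yz.1 yz.2]
  rw [lhs_eq, rhs_eq]
  exact shannon_submod q hq

/-- Entropic bilocality inequality (class 6 of Table II): for jointly distributed
finite random variables `A₀, A₁, B, C₀, C₁` with `(A₀,A₁)` independent of `(C₀,C₁)`
(in the entropic sense `H(A₀A₁C₀C₁) = H(A₀A₁) + H(C₀C₁)`), one has
`H(A₁) + H(C₁) + H(A₀B) + H(BC₀) ≤ H(A₁B) + H(BC₁) + H(A₀BC₀)`. -/

theorem entropic_bilocality_class6 {Ω α₀ α₁ β γ₀ γ₁ : Type*} [Fintype Ω]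
    [Fintype α₀] [DecidableEq α₀] [Fintype α₁] [DecidableEq α₁]
    [Fintype β] [DecidableEq β]
    [Fintype γ₀] [DecidableEq γ₀] [Fintype γ₁] [DecidableEq γ₁]
    (p : Ω → ℝ) (hp0 : ∀ ω, 0 ≤ p ω) (hp1 : ∑ ω, p ω = 1)
    (A₀ : Ω → α₀) (A₁ : Ω → α₁) (B : Ω → β) (C₀ : Ω → γ₀) (C₁ : Ω → γ₁)
    (hind : jointEntropy p (fun ω => (A₀ ω, A₁ ω, C₀ ω, C₁ ω)) =
      jointEntropy p (fun ω => (A₀ ω, A₁ ω)) + jointEntropy p (fun ω => (C₀ ω, C₁ ω))) :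
    jointEntropy p A₁ +
      jointEntropy p C₁ +
      jointEntropy p (fun ω => (A₀ ω, B ω)) +
      jointEntropy p (fun ω => (B ω, C₀ ω)) ≤
      jointEntropy p (fun ω => (A₁ ω, B ω)) +
      jointEntropy p (fun ω => (B ω, C₁ ω)) +
      jointEntropy p (fun ω => (A₀ ω, B ω, C₀ ω)) := by
  -- relabeling equalities
  have rBA1 : jointEntropy p (fun ω => (B ω, A₁ ω)) = jointEntropy p (fun ω => (A₁ ω, B ω)) :=
    jointEntropy_comp_eq p hp0 (fun ω => (A₁ ω, B ω))
      (fun t => (t.2, t.1)) (fun t => (t.2, t.1)) (fun _ => rfl)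
  have rA1A0 : jointEntropy p (fun ω => (A₁ ω, A₀ ω)) = jointEntropy p (fun ω => (A₀ ω, A₁ ω)) :=
    jointEntropy_comp_eq p hp0 (fun ω => (A₀ ω, A₁ ω))
      (fun t => (t.2, t.1)) (fun t => (t.2, t.1)) (fun _ => rfl)
  have rT1 : jointEntropy p (fun ω => (B ω, A₁ ω, A₀ ω))
      = jointEntropy p (fun ω => (A₀ ω, A₁ ω, B ω)) :=
    jointEntropy_comp_eq p hp0 (fun ω => (A₀ ω, A₁ ω, B ω))
      (fun t => (t.2.2, t.2.1, t.1)) (fun t => (t.2.2, t.2.1, t.1)) (fun _ => rfl)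
  have rC1C0 : jointEntropy p (fun ω => (C₁ ω, C₀ ω)) = jointEntropy p (fun ω => (C₀ ω, C₁ ω)) :=
    jointEntropy_comp_eq p hp0 (fun ω => (C₀ ω, C₁ ω))
      (fun t => (t.2, t.1)) (fun t => (t.2, t.1)) (fun _ => rfl)
  have rT2 : jointEntropy p (fun ω => (B ω, C₁ ω, C₀ ω))
      = jointEntropy p (fun ω => (B ω, C₀ ω, C₁ ω)) :=
    jointEntropy_comp_eq p hp0 (fun ω => (B ω, C₀ ω, C₁ ω))
      (fun t => (t.1, t.2.2, t.2.1)) (fun t => (t.1, t.2.2, t.2.1)) (fun _ => rfl)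
  have rP3 : jointEntropy p (fun ω => ((B ω, C₀ ω), C₁ ω))
      = jointEntropy p (fun ω => (B ω, C₀ ω, C₁ ω)) :=
    jointEntropy_comp_eq p hp0 (fun ω => (B ω, C₀ ω, C₁ ω))
      (fun t => ((t.1, t.2.1), t.2.2)) (fun s => (s.1.1, s.1.2, s.2)) (fun _ => rfl)
  have rT3 : jointEntropy p (fun ω => (A₀ ω, (B ω, C₀ ω), C₁ ω))
      = jointEntropy p (fun ω => ((A₀ ω, B ω), (C₀ ω, C₁ ω))) :=
    jointEntropy_comp_eq p hp0 (fun ω => ((A₀ ω, B ω), (C₀ ω, C₁ ω)))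
      (fun s => (s.1.1, (s.1.2, s.2.1), s.2.2))
      (fun t => ((t.1, t.2.1.1), (t.2.1.2, t.2.2))) (fun _ => rfl)
  have rT4a : jointEntropy p (fun ω => (A₁ ω, (A₀ ω, B ω)))
      = jointEntropy p (fun ω => (A₀ ω, A₁ ω, B ω)) :=
    jointEntropy_comp_eq p hp0 (fun ω => (A₀ ω, A₁ ω, B ω))
      (fun t => (t.2.1, (t.1, t.2.2))) (fun s => (s.2.1, s.1, s.2.2)) (fun _ => rfl)
  -- submodularity instances
  have In1 := jointEntropy_submod p hp0 B A₁ A₀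
  rw [rBA1, rA1A0, rT1] at In1
  have In2 := jointEntropy_submod p hp0 B C₁ C₀
  rw [rC1C0, rT2] at In2
  have In3 := jointEntropy_submod p hp0 A₀ (fun ω => (B ω, C₀ ω)) C₁
  rw [rP3, rT3] at In3
  have In4 := jointEntropy_submod p hp0 A₁ (fun ω => (A₀ ω, B ω)) (fun ω => (C₀ ω, C₁ ω))
  rw [rT4a] at In4
  -- monotonicity instance
  have In7 : jointEntropy p (fun ω => (A₀ ω, A₁ ω, C₀ ω, C₁ ω))
      ≤ jointEntropy p (fun ω => (A₁ ω, (A₀ ω, B ω), (C₀ ω, C₁ ω))) :=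
    jointEntropy_comp_le p hp0 (fun ω => (A₁ ω, (A₀ ω, B ω), (C₀ ω, C₁ ω)))
      (fun t => (t.2.1.1, t.1, t.2.2))
  linarith [In1, In2, In3, In4, In7, hind]
end

section
/- (Entropic bilocality inequality, class 9.) Let A₀, A₁, B, C₀, C₁ be jointly distributed random variables taking values in finite sets such that the pair (A₀,A₁) is independent of the pair (C₀,C₁), i.e. H(A₀A₁C₀C₁) = H(A₀A₁) + H(C₀C₁). Then H(A₀) + H(C₀) + H(A₁B) + H(BC₁) + H(A₀BC₀) ≤ H(A₀B) + H(BC₀) + H(A₀BC₁) + H(A₁BC₀). -/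
open Real Finset

section

variable {Ω β γ δ : Type*} [Fintype Ω] [DecidableEq β] [DecidableEq γ] [DecidableEq δ]

noncomputable def law (p : Ω → ℝ) (X : Ω → β) (b : β) : ℝ :=
  ∑ ω ∈ univ.filter (fun ω => X ω = b), p ω

lemma law_nonneg {p : Ω → ℝ} (hp : ∀ ω, 0 ≤ p ω) (X : Ω → β) (b : β) : 0 ≤ law p X b :=
  sum_nonneg fun ω _ => hp ω

lemma le_law_apply {p : Ω → ℝ} (hp : ∀ ω, 0 ≤ p ω) (X : Ω → β) (ω : Ω) :
    p ω ≤ law p X (X ω) :=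
  single_le_sum (fun ω _ => hp ω) (by simp)

lemma sum_law_mul [Fintype β] (p : Ω → ℝ) (X : Ω → β) (f : β → ℝ) :
    ∑ b, law p X b * f b = ∑ ω, p ω * f (X ω) := by
  rw [← sum_fiberwise univ X]
  refine sum_congr rfl fun b _ => ?_
  rw [law, sum_mul]
  exact sum_congr rfl fun ω hω => by rw [(mem_filter.1 hω).2]

lemma sum_law [Fintype β] (p : Ω → ℝ) (X : Ω → β) : ∑ b, law p X b = ∑ ω, p ω := by
  simpa using sum_law_mul p X fun _ => 1

lemma sum_law_prod_mk_left [Fintype β] (p : Ω → ℝ) (X : Ω → β) (Z : Ω → δ) (z : δ) :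
    ∑ x, law p (fun ω => (X ω, Z ω)) (x, z) = law p Z z := by
  simp only [law, Prod.mk.injEq, ← filter_filter, and_comm (a := X _ = _)]
  exact sum_fiberwise_of_maps_to (fun ω _ => mem_univ (X ω)) _

lemma jointEntropy_eq_sum_log_law [Fintype β] (p : Ω → ℝ) (X : Ω → β) :
    jointEntropy p X = -(∑ ω, p ω * log (law p X (X ω))) / log 2 := by
  change shannonEntropy (law p X) = _
  simp only [shannonEntropy, logb, ← mul_div_assoc, ← sum_div, neg_div]
  rw [sum_law_mul p X fun b => log (law p X b)]

lemma jointEntropy_congr_fibers [Fintype β] [Fintype γ] (p : Ω → ℝ) {X : Ω → β} {Y : Ω → γ}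
    (h : ∀ ω ω', X ω' = X ω ↔ Y ω' = Y ω) : jointEntropy p X = jointEntropy p Y := by
  simp only [jointEntropy_eq_sum_log_law, law, h]

lemma mul_log_le_mul_log {p a b : ℝ} (hp : 0 ≤ p) (hpa : p ≤ a) (hab : a ≤ b) :
    p * log a ≤ p * log b := by
  rcases hp.eq_or_lt with rfl | hp
  · simp
  · exact mul_le_mul_of_nonneg_left (log_le_log (hp.trans_le hpa) hab) hp.le

lemma jointEntropy_le_of_fibers [Fintype β] [Fintype γ] {p : Ω → ℝ} (hp : ∀ ω, 0 ≤ p ω)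
    {X : Ω → β} {Y : Ω → γ} (h : ∀ ω ω', X ω' = X ω → Y ω' = Y ω) :
    jointEntropy p Y ≤ jointEntropy p X := by
  simp only [jointEntropy_eq_sum_log_law]
  rw [div_le_div_iff_of_pos_right (log_pos one_lt_two), neg_le_neg_iff]
  refine sum_le_sum fun ω _ => mul_log_le_mul_log (hp ω) (le_law_apply hp X ω) ?_
  exact sum_le_sum_of_subset_of_nonneg (monotone_filter_right _ fun _ _ => h ω _)
    fun ω _ _ => hp ω

lemma mul_log_gibbs {p a b c d : ℝ} (hp : 0 ≤ p) (ha : p ≤ a) (hb : p ≤ b) (hc : p ≤ c)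
    (hd : p ≤ d) :
    p * log a + p * log b - p * log c - p * log d ≤ p * (a * b / (c * d)) - p := by
  rcases hp.eq_or_lt with rfl | hp
  · simp
  have ha := hp.trans_le ha
  have hb := hp.trans_le hb
  have hc := hp.trans_le hc
  have hd := hp.trans_le hd
  have hlog : log (a * b / (c * d)) = log a + log b - log c - log d := by
    rw [log_div (by positivity) (by positivity), log_mul ha.ne' hb.ne', log_mul hc.ne' hd.ne']
    ring
  have hgibbs := log_le_sub_one_of_pos (by positivity : 0 < a * b / (c * d))
  rw [hlog] at hgibbs
  nlinarith

lemma sum_mul_law_ratio_le [Fintype β] [Fintype γ] [Fintype δ] {p : Ω → ℝ}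
    (hp : ∀ ω, 0 ≤ p ω) (X : Ω → β) (Y : Ω → γ) (Z : Ω → δ) :
    ∑ ω, p ω * (law p (fun ω => (X ω, Z ω)) (X ω, Z ω) *
      law p (fun ω => (Y ω, Z ω)) (Y ω, Z ω) /
        (law p (fun ω => (X ω, Y ω, Z ω)) (X ω, Y ω, Z ω) * law p Z (Z ω))) ≤ ∑ ω, p ω := by
  set pXZ := law p fun ω => (X ω, Z ω)
  set pYZ := law p fun ω => (Y ω, Z ω)
  set pXYZ := law p fun ω => (X ω, Y ω, Z ω)
  set pZ := law p Z
  rw [← sum_law_mul p (fun ω => (X ω, Y ω, Z ω))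
    fun t => pXZ (t.1, t.2.2) * pYZ (t.2.1, t.2.2) / (pXYZ t * pZ t.2.2)]
  calc _ ≤ ∑ t : β × γ × δ, pXZ (t.1, t.2.2) * pYZ (t.2.1, t.2.2) / pZ t.2.2 := by
        refine sum_le_sum fun t _ => ?_
        have hq : 0 ≤ pXZ (t.1, t.2.2) * pYZ (t.2.1, t.2.2) / pZ t.2.2 :=
          div_nonneg (mul_nonneg (law_nonneg hp _ _) (law_nonneg hp _ _)) (law_nonneg hp _ _)
        rcases eq_or_ne (pXYZ t) 0 with h0 | h0
        · simpa [h0] using hq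
        · rw [← mul_div_assoc, mul_div_mul_left _ _ h0]
    _ = ∑ z, (∑ x, pXZ (x, z)) * (∑ y, pYZ (y, z)) / pZ z := by
        simp only [Fintype.sum_prod_type, sum_mul_sum, sum_div]
        exact (sum_congr rfl fun x _ => sum_comm).trans sum_comm
    _ = ∑ z, pZ z * pZ z / pZ z := by simp only [pXZ, pYZ, pZ, sum_law_prod_mk_left]
    _ = ∑ ω, p ω := by simp only [mul_self_div_self, pZ, sum_law]

lemma jointEntropy_submodular [Fintype β] [Fintype γ] [Fintype δ] {p : Ω → ℝ}
    (hp : ∀ ω, 0 ≤ p ω) (X : Ω → β) (Y : Ω → γ) (Z : Ω → δ) :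
    jointEntropy p (fun ω => (X ω, Y ω, Z ω)) + jointEntropy p Z ≤
      jointEntropy p (fun ω => (X ω, Z ω)) + jointEntropy p (fun ω => (Y ω, Z ω)) := by
  simp only [jointEntropy_eq_sum_log_law]
  rw [← add_div, ← add_div, div_le_div_iff_of_pos_right (log_pos one_lt_two)]
  have hgibbs := sum_le_sum fun ω (_ : ω ∈ univ) =>
    mul_log_gibbs (hp ω) (le_law_apply hp (fun ω => (X ω, Z ω)) ω)
      (le_law_apply hp (fun ω => (Y ω, Z ω)) ω) (le_law_apply hp (fun ω => (X ω, Y ω, Z ω)) ω)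
      (le_law_apply hp Z ω)
  simp only [sum_sub_distrib, sum_add_distrib] at hgibbs
  linarith [sum_mul_law_ratio_le hp X Y Z]

end

theorem entropic_bilocality_class9_general {Ω α₀ α₁ β γ₀ γ₁ : Type*} [Fintype Ω]
    [Fintype α₀] [DecidableEq α₀] [Fintype α₁] [DecidableEq α₁]
    [Fintype β] [DecidableEq β]
    [Fintype γ₀] [DecidableEq γ₀] [Fintype γ₁] [DecidableEq γ₁]
    (p : Ω → ℝ) (hp0 : ∀ ω, 0 ≤ p ω)
    (A₀ : Ω → α₀) (A₁ : Ω → α₁) (B : Ω → β) (C₀ : Ω → γ₀) (C₁ : Ω → γ₁)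
    (hind : jointEntropy p (fun ω => (A₀ ω, A₁ ω, C₀ ω, C₁ ω)) =
      jointEntropy p (fun ω => (A₀ ω, A₁ ω)) + jointEntropy p (fun ω => (C₀ ω, C₁ ω))) :
    jointEntropy p A₀ +
      jointEntropy p C₀ +
      jointEntropy p (fun ω => (A₁ ω, B ω)) +
      jointEntropy p (fun ω => (B ω, C₁ ω)) +
      jointEntropy p (fun ω => (A₀ ω, B ω, C₀ ω)) ≤
      jointEntropy p (fun ω => (A₀ ω, B ω)) +
      jointEntropy p (fun ω => (B ω, C₀ ω)) +
      jointEntropy p (fun ω => (A₀ ω, B ω, C₁ ω)) +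
      jointEntropy p (fun ω => (A₁ ω, B ω, C₀ ω)) := by
  have hB : jointEntropy p (fun ω => (A₀ ω, A₁ ω, C₀ ω, C₁ ω)) ≤
      jointEntropy p (fun ω => (A₀ ω, A₁ ω, B ω, C₀ ω, C₁ ω)) :=
    jointEntropy_le_of_fibers hp0 fun _ _ => by simp only [Prod.mk.injEq]; tauto
  have h₁ : jointEntropy p (fun ω => (A₀ ω, A₁ ω, B ω, C₀ ω)) +
      jointEntropy p (fun ω => (A₁ ω, B ω)) ≤
      jointEntropy p (fun ω => (A₀ ω, A₁ ω, B ω)) +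
      jointEntropy p (fun ω => (A₁ ω, B ω, C₀ ω)) := by
    convert jointEntropy_submodular hp0 A₀ C₀ (fun ω => (A₁ ω, B ω)) using 2 <;>
      exact jointEntropy_congr_fibers p fun _ _ => by simp only [Prod.mk.injEq]; tauto
  have h₂ : jointEntropy p (fun ω => (A₀ ω, B ω, C₀ ω, C₁ ω)) +
      jointEntropy p (fun ω => (B ω, C₁ ω)) ≤
      jointEntropy p (fun ω => (A₀ ω, B ω, C₁ ω)) +
      jointEntropy p (fun ω => (B ω, C₀ ω, C₁ ω)) := by
    convert jointEntropy_submodular hp0 A₀ C₀ (fun ω => (B ω, C₁ ω)) using 2 <;>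
      exact jointEntropy_congr_fibers p fun _ _ => by simp only [Prod.mk.injEq]; tauto
  have h₃ : jointEntropy p (fun ω => (A₀ ω, A₁ ω, B ω)) + jointEntropy p A₀ ≤
      jointEntropy p (fun ω => (A₀ ω, A₁ ω)) + jointEntropy p (fun ω => (A₀ ω, B ω)) := by
    convert jointEntropy_submodular hp0 A₁ B A₀ using 2 <;>
      exact jointEntropy_congr_fibers p fun _ _ => by simp only [Prod.mk.injEq]; tauto
  have h₄ : jointEntropy p (fun ω => (A₀ ω, A₁ ω, B ω, C₀ ω, C₁ ω)) +
      jointEntropy p (fun ω => (A₀ ω, B ω, C₀ ω)) ≤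
      jointEntropy p (fun ω => (A₀ ω, A₁ ω, B ω, C₀ ω)) +
      jointEntropy p (fun ω => (A₀ ω, B ω, C₀ ω, C₁ ω)) := by
    convert jointEntropy_submodular hp0 A₁ C₁ (fun ω => (A₀ ω, B ω, C₀ ω)) using 2 <;>
      exact jointEntropy_congr_fibers p fun _ _ => by simp only [Prod.mk.injEq]; tauto
  have h₅ : jointEntropy p (fun ω => (B ω, C₀ ω, C₁ ω)) + jointEntropy p C₀ ≤
      jointEntropy p (fun ω => (B ω, C₀ ω)) + jointEntropy p (fun ω => (C₀ ω, C₁ ω)) := by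
    convert jointEntropy_submodular hp0 B C₁ C₀ using 2 <;>
      exact jointEntropy_congr_fibers p fun _ _ => by simp only [Prod.mk.injEq]; tauto
  linarith

/-- Entropic bilocality inequality (class 9 of Table II): for jointly distributed
finite random variables `A₀, A₁, B, C₀, C₁` with `(A₀,A₁)` independent of `(C₀,C₁)`
(in the entropic sense `H(A₀A₁C₀C₁) = H(A₀A₁) + H(C₀C₁)`), one has
`H(A₀) + H(C₀) + H(A₁B) + H(BC₁) + H(A₀BC₀) ≤ H(A₀B) + H(BC₀) + H(A₀BC₁) + H(A₁BC₀)`. -/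
theorem entropic_bilocality_class9 {Ω α₀ α₁ β γ₀ γ₁ : Type*} [Fintype Ω]
    [Fintype α₀] [DecidableEq α₀] [Fintype α₁] [DecidableEq α₁]
    [Fintype β] [DecidableEq β]
    [Fintype γ₀] [DecidableEq γ₀] [Fintype γ₁] [DecidableEq γ₁]
    (p : Ω → ℝ) (hp0 : ∀ ω, 0 ≤ p ω) (hp1 : ∑ ω, p ω = 1)
    (A₀ : Ω → α₀) (A₁ : Ω → α₁) (B : Ω → β) (C₀ : Ω → γ₀) (C₁ : Ω → γ₁)
    (hind : jointEntropy p (fun ω => (A₀ ω, A₁ ω, C₀ ω, C₁ ω)) =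
      jointEntropy p (fun ω => (A₀ ω, A₁ ω)) + jointEntropy p (fun ω => (C₀ ω, C₁ ω))) :
    jointEntropy p A₀ +
      jointEntropy p C₀ +
      jointEntropy p (fun ω => (A₁ ω, B ω)) +
      jointEntropy p (fun ω => (B ω, C₁ ω)) +
      jointEntropy p (fun ω => (A₀ ω, B ω, C₀ ω)) ≤
      jointEntropy p (fun ω => (A₀ ω, B ω)) +
      jointEntropy p (fun ω => (B ω, C₀ ω)) +
      jointEntropy p (fun ω => (A₀ ω, B ω, C₁ ω)) +
      jointEntropy p (fun ω => (A₁ ω, B ω, C₀ ω)) :=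
  entropic_bilocality_class9_general p hp0 A₀ A₁ B C₀ C₁ hind
end
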